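/- arXiv:math/0309055 — 3 statements merged into one kernel-verified Lean document; each statement's English description precedes it below -/
import Mathlib

section
/- Let A be a finite set of integers and h ≥ 2. Then |hA| ≥ |A|^h / λ_{2h}(A)^{2h}, where λ_{2h}(A) is the Λ_{2h}-constant of A. -/
open Pointwise

noncomputable def lambdaConst (q : ℝ) (A : Finset ℤ) : ℝ :=
  sSup {t : ℝ | ∃ c : ℤ → ℝ, (∑ n ∈ A, (c n) ^ 2) ≤ 1 ∧
    t = (∫ θ in (0:ℝ)..1,
          ‖∑ n ∈ A, (c n : ℂ) * Complex.exp (2 * Real.pi * Complex.I * n * θ)‖ ^ q)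
        ^ (1 / q)}

/-!
Testing `λ_{2h}(A)` against the flat coefficients `c_n = |A|^{-1/2}` gives
`λ_{2h}(A)^{2h} ≥ |A|^{-h} ∫ |∑_{n ∈ A} e(nθ)|^{2h}`. Expanding
`(∑_{n ∈ A} e(nθ))^h = ∑_{s ∈ hA} r(s) e(sθ)`, where `r(s)` counts the ordered ways of writing `s`
as a sum of `h` elements of `A`, Parseval turns the integral into the energy `E = ∑_s r(s)^2`, and
Cauchy–Schwarz over `hA` gives `|A|^{2h} = (∑_s r(s))^2 ≤ |hA| E`.
-/

open Finset Complex ComplexConjugate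
open scoped Real

section Counting

variable {α : Type*} [AddCommMonoid α] [DecidableEq α]

def sumRepCount (A : Finset α) (h : ℕ) (s : α) : ℕ :=
  #{p ∈ Fintype.piFinset fun _ : Fin h ↦ A | ∑ i, p i = s}

/-- `E_h(A) = #{(p, q) ∈ A^h × A^h | ∑ p = ∑ q}`, grouped by the common value of the sums. -/
def multiEnergy (A : Finset α) (h : ℕ) : ℕ :=
  ∑ s ∈ h • A, sumRepCount A h s ^ 2

lemma sum_mem_nsmul {A : Finset α} {h : ℕ} {p : Fin h → α}
    (hp : p ∈ Fintype.piFinset fun _ ↦ A) : ∑ i, p i ∈ h • A :=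
  mem_nsmul.2 ⟨fun i ↦ ⟨p i, Fintype.mem_piFinset.1 hp i⟩, List.sum_ofFn⟩

lemma sum_sumRepCount (A : Finset α) (h : ℕ) : ∑ s ∈ h • A, sumRepCount A h s = #A ^ h := by
  rw [← Fintype.card_piFinset_const, card_eq_sum_card_fiberwise fun _ ↦ sum_mem_nsmul]
  rfl

lemma card_pow_sq_le_card_nsmul_mul_multiEnergy (A : Finset α) (h : ℕ) :
    (#A ^ h) ^ 2 ≤ #(h • A) * multiEnergy A h := by
  rw [← sum_sumRepCount]
  exact sq_sum_le_card_mul_sum_sq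

end Counting

section Fourier

lemma integral_exp_two_pi_I_int_mul (m : ℤ) :
    ∫ θ in (0:ℝ)..1, exp (2 * π * I * m * θ) = if m = 0 then 1 else 0 := by
  split_ifs with hm
  · simp [hm]
  have hc : 2 * π * I * m ≠ 0 := by simp [Real.pi_ne_zero, I_ne_zero, hm]
  rw [integral_exp_mul_complex hc, ofReal_one, ofReal_zero, mul_one, mul_zero, exp_zero,
    sub_eq_zero.2, zero_div]
  simpa [mul_comm, mul_assoc] using exp_int_mul_two_pi_mul_I m

lemma exp_mul_conj_exp (m n : ℤ) (θ : ℝ) :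
    exp (2 * π * I * m * θ) * conj (exp (2 * π * I * n * θ)) =
      exp (2 * π * I * (m - n : ℤ) * θ) := by
  rw [← exp_conj, ← exp_add]
  congr 1
  simp only [map_mul, conj_ofReal, conj_I, map_intCast, map_ofNat]
  push_cast
  ring

lemma integral_norm_sum_exp_sq (S : Finset ℤ) (a : ℤ → ℂ) :
    ∫ θ in (0:ℝ)..1, ‖∑ n ∈ S, a n * exp (2 * π * I * n * θ)‖ ^ 2 = ∑ n ∈ S, ‖a n‖ ^ 2 := by
  apply ofReal_injective
  calc ((∫ θ in (0:ℝ)..1, ‖∑ n ∈ S, a n * exp (2 * π * I * n * θ)‖ ^ 2 : ℝ) : ℂ)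
      = ∫ θ in (0:ℝ)..1, ∑ m ∈ S, ∑ n ∈ S,
          a m * conj (a n) * exp (2 * π * I * (m - n : ℤ) * θ) := by
        rw [← intervalIntegral.integral_ofReal]
        refine intervalIntegral.integral_congr fun θ _ ↦ ?_
        simp only [ofReal_pow, ← mul_conj', map_sum, map_mul, sum_mul_sum]
        refine sum_congr rfl fun m _ ↦ sum_congr rfl fun n _ ↦ ?_
        rw [← exp_mul_conj_exp]
        ring
    _ = ∑ m ∈ S, ∑ n ∈ S, a m * conj (a n) * if m - n = 0 then 1 else 0 := by
        have hcont : ∀ m n : ℤ,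
            Continuous fun θ : ℝ ↦ a m * conj (a n) * exp (2 * π * I * (m - n : ℤ) * θ) := by
          fun_prop
        rw [intervalIntegral.integral_finsetSum fun m _ ↦
          (continuous_finsetSum _ fun n _ ↦ hcont m n).intervalIntegrable _ _]
        refine sum_congr rfl fun m _ ↦ ?_
        rw [intervalIntegral.integral_finsetSum fun n _ ↦ (hcont m n).intervalIntegrable _ _]
        simp only [intervalIntegral.integral_const_mul, integral_exp_two_pi_I_int_mul]
    _ = _ := by
        simp [sub_eq_zero, mul_conj']

lemma sum_exp_pow (A : Finset ℤ) (h : ℕ) (θ : ℝ) :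
    (∑ n ∈ A, exp (2 * π * I * n * θ)) ^ h =
      ∑ s ∈ h • A, (sumRepCount A h s : ℂ) * exp (2 * π * I * s * θ) := by
  have hexp : ∀ p : Fin h → ℤ,
      ∏ i, exp (2 * π * I * p i * θ) = exp (2 * π * I * ↑(∑ i, p i) * θ) := by
    intro p
    rw [← exp_sum]
    push_cast
    rw [mul_sum, sum_mul]
  simp_rw [sum_pow', hexp]
  rw [← sum_fiberwise_of_maps_to fun _ ↦ sum_mem_nsmul]
  refine sum_congr rfl fun s _ ↦ ?_
  rw [sum_congr rfl fun p hp ↦ by rw [(mem_filter.1 hp).2], sum_const, nsmul_eq_mul]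
  rfl

lemma integral_norm_sum_exp_pow (A : Finset ℤ) (h : ℕ) :
    ∫ θ in (0:ℝ)..1, ‖∑ n ∈ A, exp (2 * π * I * n * θ)‖ ^ (2 * h) = multiEnergy A h := by
  simp_rw [pow_mul', ← norm_pow _ h, sum_exp_pow, integral_norm_sum_exp_sq, norm_natCast]
  push_cast [multiEnergy]
  rfl

end Fourier

noncomputable def trigNorm (q : ℝ) (A : Finset ℤ) (c : ℤ → ℝ) : ℝ :=
  (∫ θ in (0:ℝ)..1, ‖∑ n ∈ A, (c n : ℂ) * exp (2 * π * I * n * θ)‖ ^ q) ^ (1 / q)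

section TrigNorm

variable {q : ℝ} {A : Finset ℤ}

lemma trigNorm_nonneg (q : ℝ) (A : Finset ℤ) (c : ℤ → ℝ) : 0 ≤ trigNorm q A c :=
  Real.rpow_nonneg (intervalIntegral.integral_nonneg zero_le_one fun _ _ ↦ by positivity) _

lemma trigNorm_le_sum_abs (hq : 0 < q) (c : ℤ → ℝ) : trigNorm q A c ≤ ∑ n ∈ A, |c n| := by
  have hsup : ∀ θ : ℝ, ‖∑ n ∈ A, (c n : ℂ) * exp (2 * π * I * n * θ)‖ ≤ ∑ n ∈ A, |c n| := by
    intro θ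
    refine (norm_sum_le _ _).trans_eq (sum_congr rfl fun n _ ↦ ?_)
    rw [norm_mul, norm_real, Real.norm_eq_abs, norm_exp]
    simp
  have hM : 0 ≤ ∑ n ∈ A, |c n| := sum_nonneg fun n _ ↦ abs_nonneg _
  have hI : ∫ θ in (0:ℝ)..1, ‖∑ n ∈ A, (c n : ℂ) * exp (2 * π * I * n * θ)‖ ^ q ≤
      (∑ n ∈ A, |c n|) ^ q := by
    calc _ ≤ ‖∫ θ in (0:ℝ)..1, ‖∑ n ∈ A, (c n : ℂ) * exp (2 * π * I * n * θ)‖ ^ q‖ :=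
          Real.le_norm_self _
      _ ≤ (∑ n ∈ A, |c n|) ^ q * |1 - 0| :=
          intervalIntegral.norm_integral_le_of_norm_le_const fun θ _ ↦ by
            rw [Real.norm_of_nonneg (by positivity)]
            exact Real.rpow_le_rpow (norm_nonneg _) (hsup θ) hq.le
      _ = (∑ n ∈ A, |c n|) ^ q := by norm_num
  calc trigNorm q A c ≤ ((∑ n ∈ A, |c n|) ^ q) ^ (1 / q) :=
        Real.rpow_le_rpow (intervalIntegral.integral_nonneg zero_le_one fun _ _ ↦ by positivity) hI
          (by positivity)
    _ = ∑ n ∈ A, |c n| := by rw [one_div, Real.rpow_rpow_inv hM hq.ne']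

lemma bddAbove_trigNorm (hq : 0 < q) (A : Finset ℤ) :
    BddAbove {t | ∃ c : ℤ → ℝ, ∑ n ∈ A, c n ^ 2 ≤ 1 ∧ t = trigNorm q A c} := by
  refine ⟨#A, ?_⟩
  rintro _ ⟨c, hc, rfl⟩
  refine (trigNorm_le_sum_abs hq c).trans ?_
  rw [← nsmul_one, ← sum_const]
  refine sum_le_sum fun n hn ↦ abs_le_one_iff_mul_self_le_one.2 ?_
  rw [← sq]
  exact (single_le_sum (fun i _ ↦ sq_nonneg (c i)) hn).trans hc

lemma trigNorm_le_lambdaConst (hq : 0 < q) {c : ℤ → ℝ} (hc : ∑ n ∈ A, c n ^ 2 ≤ 1) :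
    trigNorm q A c ≤ lambdaConst q A :=
  le_csSup (bddAbove_trigNorm hq A) ⟨c, hc, rfl⟩

lemma trigNorm_smul (hq : 0 < q) (a : ℝ) (c : ℤ → ℝ) :
    trigNorm q A (a • c) = |a| * trigNorm q A c := by
  have hnorm : ∀ θ : ℝ, ‖∑ n ∈ A, ((a • c) n : ℂ) * exp (2 * π * I * n * θ)‖ ^ q =
      |a| ^ q * ‖∑ n ∈ A, (c n : ℂ) * exp (2 * π * I * n * θ)‖ ^ q := by
    intro θ
    simp only [Pi.smul_apply, smul_eq_mul, ofReal_mul, mul_assoc, ← mul_sum, norm_mul, norm_real,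
      Real.norm_eq_abs]
    exact Real.mul_rpow (abs_nonneg a) (norm_nonneg _)
  rw [trigNorm, trigNorm, intervalIntegral.integral_congr fun θ _ ↦ hnorm θ,
    intervalIntegral.integral_const_mul, Real.mul_rpow (by positivity)
      (intervalIntegral.integral_nonneg zero_le_one fun _ _ ↦ by positivity),
    one_div, Real.rpow_rpow_inv (abs_nonneg a) hq.ne']

lemma trigNorm_natCast_pow {n : ℕ} (hn : n ≠ 0) (c : ℤ → ℝ) :
    trigNorm n A c ^ n = ∫ θ in (0:ℝ)..1, ‖∑ k ∈ A, (c k : ℂ) * exp (2 * π * I * k * θ)‖ ^ n := by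
  simp_rw [trigNorm, Real.rpow_natCast, one_div]
  exact Real.rpow_inv_natCast_pow
    (intervalIntegral.integral_nonneg zero_le_one fun _ _ ↦ by positivity) hn

end TrigNorm

lemma multiEnergy_le_card_pow_mul_lambdaConst_pow {A : Finset ℤ} (hA : A.Nonempty) {h : ℕ}
    (hh : h ≠ 0) : (multiEnergy A h : ℝ) ≤ #A ^ h * lambdaConst (2 * h) A ^ (2 * h) := by
  have hq : (0 : ℝ) < 2 * h := by positivity
  have hA' : (0 : ℝ) < #A := by exact_mod_cast hA.card_pos
  have hc : ∑ n ∈ A, ((√(#A : ℝ))⁻¹ • (1 : ℤ → ℝ)) n ^ 2 ≤ 1 := by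
    simp [inv_pow, Real.sq_sqrt hA'.le, hA'.ne']
  have hle := trigNorm_le_lambdaConst hq hc
  rw [trigNorm_smul hq, abs_of_pos (by positivity), inv_mul_le_iff₀ (by positivity)] at hle
  have hE : trigNorm (2 * h) A 1 ^ (2 * h) = multiEnergy A h := by
    have := trigNorm_natCast_pow (A := A) (n := 2 * h) (by positivity) 1
    push_cast at this
    simpa [this] using integral_norm_sum_exp_pow A h
  calc (multiEnergy A h : ℝ) = trigNorm (2 * h) A 1 ^ (2 * h) := hE.symm
    _ ≤ (√(#A : ℝ) * lambdaConst (2 * h) A) ^ (2 * h) :=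
        pow_le_pow_left₀ (trigNorm_nonneg _ _ _) hle _
    _ = _ := by rw [mul_pow, pow_mul, Real.sq_sqrt hA'.le]

theorem sumset_lower_via_lambda (A : Finset ℤ) (hA : A.Nonempty) (h : ℕ) (hh : 2 ≤ h) :
    (A.card : ℝ) ^ h / (lambdaConst (2 * (h : ℝ)) A) ^ (2 * h) ≤ ((h • A).card : ℝ) := by
  have hAh : (0 : ℝ) < #A ^ h := by have := hA.card_pos; positivity
  have hCS : ((#A : ℝ) ^ h) ^ 2 ≤ #(h • A) * multiEnergy A h := by
    exact_mod_cast card_pow_sq_le_card_nsmul_mul_multiEnergy A h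
  have hE := multiEnergy_le_card_pow_mul_lambdaConst_pow hA (by omega : h ≠ 0)
  refine div_le_of_le_mul₀ ((even_two_mul h).pow_nonneg _) (by positivity)
    (le_of_mul_le_mul_left ?_ hAh)
  calc (#A : ℝ) ^ h * #A ^ h = ((#A : ℝ) ^ h) ^ 2 := (sq _).symm
    _ ≤ #(h • A) * multiEnergy A h := hCS
    _ ≤ #(h • A) * (#A ^ h * lambdaConst (2 * h) A ^ (2 * h)) :=
        mul_le_mul_of_nonneg_left hE (by positivity)
    _ = #A ^ h * (#(h • A) * lambdaConst (2 * h) A ^ (2 * h)) := by ring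
end

section
/- Let A₁, A₂ be finite sets and 𝒢 ⊆ A₁ × A₂ with |𝒢| > δ|A₁||A₂|, where 0 < δ ≤ 1. Then there exist subsets A₁' ⊆ A₁ and A₂' ⊆ A₂ such that: (i) for every nonempty B₁ ⊆ A₁', |𝒢 ∩ (B₁ × A₂')| > (δ/4)|B₁||A₂'|; (ii) for every nonempty B₂ ⊆ A₂', |𝒢 ∩ (A₁' × B₂)| > (δ/4)|B₂||A₁'|; and (iii) |Aᵢ'| > (3δ/4)|Aᵢ| for i = 1, 2. -/
/-!
Start from `A₁ × A₂` and, as long as some nonempty `B` violates (i) or (ii), delete it from the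
corresponding side. A deleted `B` carries at most `(δ/4)|B||A₂'|` (resp. `(δ/4)|B||A₁'|`) edges,
so the edges of `𝒢` outside `A₁' × A₂'` never exceed `δ/4` times the number of pairs outside it.
The process stops because `|A₁'| + |A₂'|` decreases, and then
`δ|A₁||A₂| < |𝒢| ≤ |A₁'||A₂'| + (δ/4)|A₁||A₂| ≤ |A₁'||A₂| + (δ/4)|A₁||A₂|`, which is (iii)
for `A₁'`; symmetrically for `A₂'`.
-/

open Finset

namespace Finset

variable {α β : Type*} [DecidableEq α] [DecidableEq β] (𝒢 : Finset (α × β))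

def edgeCount (S : Finset α) (T : Finset β) : ℕ :=
  (𝒢.filter fun p => p.1 ∈ S ∧ p.2 ∈ T).card

theorem edgeCount_le_card_mul_card (S : Finset α) (T : Finset β) :
    𝒢.edgeCount S T ≤ S.card * T.card := by
  rw [← card_product]
  exact card_le_card fun p hp => mem_product.mpr (mem_filter.mp hp).2

theorem edgeCount_of_subset_product {S : Finset α} {T : Finset β} (h𝒢 : 𝒢 ⊆ S ×ˢ T) :
    𝒢.edgeCount S T = 𝒢.card := by
  rw [edgeCount, filter_true_of_mem fun p hp => mem_product.mp (h𝒢 hp)]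

theorem edgeCount_sdiff_add_left {S B : Finset α} (T : Finset β) (hB : B ⊆ S) :
    𝒢.edgeCount (S \ B) T + 𝒢.edgeCount B T = 𝒢.edgeCount S T := by
  rw [edgeCount, edgeCount, ← card_union_of_disjoint, ← filter_or, edgeCount]
  · congr 1
    refine filter_congr fun p _ => ?_
    rw [← or_and_right, ← mem_union, sdiff_union_of_subset hB]
  · exact disjoint_filter_filter' _ _ fun q h₁ h₂ p hp =>
      (mem_sdiff.mp (h₁ p hp).1).2 (h₂ p hp).1

theorem edgeCount_sdiff_add_right (S : Finset α) {T B : Finset β} (hB : B ⊆ T) :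
    𝒢.edgeCount S (T \ B) + 𝒢.edgeCount S B = 𝒢.edgeCount S T := by
  rw [edgeCount, edgeCount, ← card_union_of_disjoint, ← filter_or, edgeCount]
  · congr 1
    refine filter_congr fun p _ => ?_
    rw [← and_or_left, ← mem_union, sdiff_union_of_subset hB]
  · exact disjoint_filter_filter' _ _ fun q h₁ h₂ p hp =>
      (mem_sdiff.mp (h₁ p hp).2).2 (h₂ p hp).2

def LeftDense (ε : ℝ) (S : Finset α) (T : Finset β) : Prop :=
  ∀ B ⊆ S, B.Nonempty → ε * B.card * T.card < 𝒢.edgeCount B T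

def RightDense (ε : ℝ) (S : Finset α) (T : Finset β) : Prop :=
  ∀ B ⊆ T, B.Nonempty → ε * B.card * S.card < 𝒢.edgeCount S B

/-- When `𝒢 ⊆ A₁ ×ˢ A₂`, the left-hand side counts the edges of `𝒢` outside `S ×ˢ T`. -/
def SparseOutside (ε : ℝ) (A₁ : Finset α) (A₂ : Finset β) (S : Finset α) (T : Finset β) :
    Prop :=
  (𝒢.card : ℝ) - 𝒢.edgeCount S T ≤ ε * (A₁.card * A₂.card - S.card * T.card)

variable {𝒢} {ε : ℝ} {A₁ S : Finset α} {A₂ T : Finset β}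

theorem sparseOutside_self (ε : ℝ) (h𝒢 : 𝒢 ⊆ A₁ ×ˢ A₂) : 𝒢.SparseOutside ε A₁ A₂ A₁ A₂ := by
  simp [SparseOutside, edgeCount_of_subset_product 𝒢 h𝒢]

namespace SparseOutside

theorem sdiff_left (h : 𝒢.SparseOutside ε A₁ A₂ S T) {B : Finset α} (hB : B ⊆ S)
    (hsparse : (𝒢.edgeCount B T : ℝ) ≤ ε * B.card * T.card) :
    𝒢.SparseOutside ε A₁ A₂ (S \ B) T := by
  have hsplit : (𝒢.edgeCount (S \ B) T : ℝ) + 𝒢.edgeCount B T = 𝒢.edgeCount S T := by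
    exact_mod_cast edgeCount_sdiff_add_left 𝒢 T hB
  have hcard : ((S \ B).card : ℝ) = S.card - B.card := by
    rw [card_sdiff_of_subset hB, Nat.cast_sub (card_le_card hB)]
  unfold SparseOutside at h ⊢
  rw [hcard]
  linarith

theorem sdiff_right (h : 𝒢.SparseOutside ε A₁ A₂ S T) {B : Finset β} (hB : B ⊆ T)
    (hsparse : (𝒢.edgeCount S B : ℝ) ≤ ε * B.card * S.card) :
    𝒢.SparseOutside ε A₁ A₂ S (T \ B) := by
  have hsplit : (𝒢.edgeCount S (T \ B) : ℝ) + 𝒢.edgeCount S B = 𝒢.edgeCount S T := by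
    exact_mod_cast edgeCount_sdiff_add_right 𝒢 S hB
  have hcard : ((T \ B).card : ℝ) = T.card - B.card := by
    rw [card_sdiff_of_subset hB, Nat.cast_sub (card_le_card hB)]
  unfold SparseOutside at h ⊢
  rw [hcard]
  linarith

theorem exists_subset_dense (h : 𝒢.SparseOutside ε A₁ A₂ S T) :
    ∃ S' ⊆ S, ∃ T' ⊆ T,
      𝒢.LeftDense ε S' T' ∧ 𝒢.RightDense ε S' T' ∧ 𝒢.SparseOutside ε A₁ A₂ S' T' := by
  induction hn : S.card + T.card using Nat.strong_induction_on generalizing S T with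
  | _ n ih =>
    by_cases hL : 𝒢.LeftDense ε S T
    · by_cases hR : 𝒢.RightDense ε S T
      · exact ⟨S, subset_rfl, T, subset_rfl, hL, hR, h⟩
      · simp only [RightDense, not_forall, not_lt] at hR
        obtain ⟨B, hBT, hB, hsparse⟩ := hR
        have hlt : S.card + (T \ B).card < n :=
          hn ▸ Nat.add_lt_add_left (card_lt_card (sdiff_ssubset hBT hB)) _
        obtain ⟨S', hS', T', hT', hdense⟩ := ih _ hlt (h.sdiff_right hBT hsparse) rfl
        exact ⟨S', hS', T', hT'.trans sdiff_subset, hdense⟩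
    · simp only [LeftDense, not_forall, not_lt] at hL
      obtain ⟨B, hBS, hB, hsparse⟩ := hL
      have hlt : (S \ B).card + T.card < n :=
        hn ▸ Nat.add_lt_add_right (card_lt_card (sdiff_ssubset hBS hB)) _
      obtain ⟨S', hS', T', hT', hdense⟩ := ih _ hlt (h.sdiff_left hBS hsparse) rfl
      exact ⟨S', hS'.trans sdiff_subset, T', hT', hdense⟩

theorem sub_mul_card_lt_card_left {δ : ℝ} (h : 𝒢.SparseOutside ε A₁ A₂ S T) (hε : 0 ≤ ε)
    (hT : T ⊆ A₂) (hcard : δ * A₁.card * A₂.card < 𝒢.card) :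
    (δ - ε) * A₁.card < S.card := by
  have hedges : (𝒢.edgeCount S T : ℝ) ≤ S.card * T.card := by
    exact_mod_cast edgeCount_le_card_mul_card 𝒢 S T
  have hT' : (S.card * T.card : ℝ) ≤ S.card * A₂.card := by gcongr
  have hpairs : 0 ≤ ε * (S.card * T.card : ℝ) := by positivity
  unfold SparseOutside at h
  refine lt_of_mul_lt_mul_right ?_ (Nat.cast_nonneg A₂.card)
  linarith

theorem sub_mul_card_lt_card_right {δ : ℝ} (h : 𝒢.SparseOutside ε A₁ A₂ S T) (hε : 0 ≤ ε)
    (hS : S ⊆ A₁) (hcard : δ * A₁.card * A₂.card < 𝒢.card) :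
    (δ - ε) * A₂.card < T.card := by
  have hedges : (𝒢.edgeCount S T : ℝ) ≤ S.card * T.card := by
    exact_mod_cast edgeCount_le_card_mul_card 𝒢 S T
  have hS' : (S.card * T.card : ℝ) ≤ A₁.card * T.card := by gcongr
  have hpairs : 0 ≤ ε * (S.card * T.card : ℝ) := by positivity
  unfold SparseOutside at h
  refine lt_of_mul_lt_mul_left ?_ (Nat.cast_nonneg A₁.card)
  linarith

end SparseOutside

end Finset

theorem graph_density_regularization_general {α β : Type*} [DecidableEq α] [DecidableEq β]
    (A₁ : Finset α) (A₂ : Finset β) (𝒢 : Finset (α × β)) (h𝒢 : 𝒢 ⊆ A₁ ×ˢ A₂)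
    (δ : ℝ) (hδ0 : 0 < δ)
    (hcard : δ * A₁.card * A₂.card < 𝒢.card) :
    ∃ A₁' ⊆ A₁, ∃ A₂' ⊆ A₂,
      (∀ B₁ ⊆ A₁', B₁.Nonempty →
        (δ / 4) * B₁.card * A₂'.card < (((𝒢.filter fun p => p.1 ∈ B₁ ∧ p.2 ∈ A₂')).card : ℝ)) ∧
      (∀ B₂ ⊆ A₂', B₂.Nonempty →
        (δ / 4) * B₂.card * A₁'.card < (((𝒢.filter fun p => p.1 ∈ A₁' ∧ p.2 ∈ B₂)).card : ℝ)) ∧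
      (3 * δ / 4) * A₁.card < (A₁'.card : ℝ) ∧ (3 * δ / 4) * A₂.card < (A₂'.card : ℝ) := by
  obtain ⟨A₁', h₁, A₂', h₂, hleft, hright, hsparse⟩ :=
    (sparseOutside_self (δ / 4) h𝒢).exists_subset_dense
  have hε : 0 ≤ δ / 4 := by positivity
  have hδ : 3 * δ / 4 = δ - δ / 4 := by ring
  refine ⟨A₁', h₁, A₂', h₂, hleft, hright, ?_, ?_⟩
  · rw [hδ]
    exact hsparse.sub_mul_card_lt_card_left hε h₂ hcard
  · rw [hδ]
    exact hsparse.sub_mul_card_lt_card_right hε h₁ hcard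

theorem graph_density_regularization {α β : Type*} [DecidableEq α] [DecidableEq β]
    (A₁ : Finset α) (A₂ : Finset β) (𝒢 : Finset (α × β)) (h𝒢 : 𝒢 ⊆ A₁ ×ˢ A₂)
    (δ : ℝ) (hδ0 : 0 < δ) (hδ1 : δ ≤ 1)
    (hcard : δ * A₁.card * A₂.card < 𝒢.card) :
    ∃ A₁' ⊆ A₁, ∃ A₂' ⊆ A₂,
      (∀ B₁ ⊆ A₁', B₁.Nonempty →
        (δ / 4) * B₁.card * A₂'.card < (((𝒢.filter fun p => p.1 ∈ B₁ ∧ p.2 ∈ A₂')).card : ℝ)) ∧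
      (∀ B₂ ⊆ A₂', B₂.Nonempty →
        (δ / 4) * B₂.card * A₁'.card < (((𝒢.filter fun p => p.1 ∈ A₁' ∧ p.2 ∈ B₂)).card : ℝ)) ∧
      (3 * δ / 4) * A₁.card < (A₁'.card : ℝ) ∧ (3 * δ / 4) * A₂.card < (A₂'.card : ℝ) :=
  graph_density_regularization_general A₁ A₂ 𝒢 h𝒢 δ hδ0 hcard
end

section
/- Let A₁, A₂ be finite subsets of an abelian group, 𝒢 ⊆ A₁ × A₂. Suppose A₁, A₂ each fiber over projections π: Aᵢ → Sᵢ, and 𝒢 respects the fibration: 𝒢 = ∪_{(s₁,s₂)∈ℋ} 𝒢_{s₁,s₂} with 𝒢_{s₁,s₂} ⊆ A₁(s₁) × A₂(s₂), where ℋ ⊆ S₁ × S₂ and Aᵢ(sᵢ) = π^{-1}(sᵢ) ∩ Aᵢ. Then |A₁ +_𝒢 A₂| ≥ |{π(x₁)+π(x₂) : (x₁,x₂) ∈ 𝒢}| · min_{(s₁,s₂)∈ℋ} |A₁(s₁) +_{𝒢_{s₁,s₂}} A₂(s₂)|, provided the group splits as a direct sum compatible with π (i.e., π is a group homomorphism and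 elements are determined by (π-part, fiber-part)). -/
/-! Projecting the sumset `A₁ +_𝒢 A₂ ⊆ G₁ × G₂` to `G₁` gives the base sumset, and over each base
sum `s₁ + s₂` with `(s₁, s₂) ∈ ℋ` the sumset contains `{s₁ + s₂} × (A₁(s₁) +_{𝒢_{s₁,s₂}} A₂(s₂))`,
so every fiber of the projection has at least `m` points. -/

namespace Finset

variable {G₁ G₂ : Type*} [Add G₁] [Add G₂] [DecidableEq G₁] [DecidableEq G₂]

theorem image_fst_image_add (𝒢 : Finset ((G₁ × G₂) × (G₁ × G₂))) :
    (𝒢.image fun p => p.1 + p.2).image Prod.fst = 𝒢.image fun p => p.1.1 + p.2.1 := by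
  rw [image_image]
  rfl

theorem card_image_add_snd_filter_le_card_filter_fst (𝒢 : Finset ((G₁ × G₂) × (G₁ × G₂)))
    (s : G₁ × G₁) :
    ((𝒢.filter fun p => p.1.1 = s.1 ∧ p.2.1 = s.2).image fun p => p.1.2 + p.2.2).card ≤
      ((𝒢.image fun p => p.1 + p.2).filter fun x => x.1 = s.1 + s.2).card := by
  refine card_le_card_of_injOn (fun y => (s.1 + s.2, y)) ?_ fun y _ z _ h => (Prod.ext_iff.1 h).2
  rintro _ hy
  simp only [coe_image, coe_filter, Set.mem_image, Set.mem_ofPred_eq] at hy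
  obtain ⟨p, ⟨hp, h₁, h₂⟩, rfl⟩ := hy
  simp only [coe_filter, mem_image, Set.mem_ofPred_eq, and_true]
  exact ⟨p, hp, by rw [Prod.add_def, h₁, h₂]⟩

end Finset

theorem fibered_sumset_lower_bound_general {G₁ G₂ : Type*} [AddCommGroup G₁] [AddCommGroup G₂]
    [DecidableEq G₁] [DecidableEq G₂]
    (ℋ : Finset (G₁ × G₁))
    (𝒢 : Finset ((G₁ × G₂) × (G₁ × G₂)))
    (hbase : ∀ p ∈ 𝒢, (p.1.1, p.2.1) ∈ ℋ) (m : ℕ)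
    (hfib : ∀ s ∈ ℋ,
      m ≤ (((𝒢.filter fun p => p.1.1 = s.1 ∧ p.2.1 = s.2)).image fun p => p.1.2 + p.2.2).card) :
    (𝒢.image fun p => p.1.1 + p.2.1).card * m ≤ (𝒢.image fun p => p.1 + p.2).card := by
  rw [mul_comm, ← Finset.image_fst_image_add]
  refine Finset.mul_card_image_le_card _ m fun b hb => ?_
  obtain ⟨_, hx, rfl⟩ := Finset.mem_image.1 hb
  obtain ⟨p, hp, rfl⟩ := Finset.mem_image.1 hx
  exact (hfib _ (hbase p hp)).trans (Finset.card_image_add_snd_filter_le_card_filter_fst 𝒢 _)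

theorem fibered_sumset_lower_bound {G₁ G₂ : Type*} [AddCommGroup G₁] [AddCommGroup G₂]
    [DecidableEq G₁] [DecidableEq G₂]
    (A₁ A₂ : Finset (G₁ × G₂)) (ℋ : Finset (G₁ × G₁))
    (𝒢 : Finset ((G₁ × G₂) × (G₁ × G₂))) (h𝒢 : 𝒢 ⊆ A₁ ×ˢ A₂)
    (hbase : ∀ p ∈ 𝒢, (p.1.1, p.2.1) ∈ ℋ) (m : ℕ)
    (hfib : ∀ s ∈ ℋ,
      m ≤ (((𝒢.filter fun p => p.1.1 = s.1 ∧ p.2.1 = s.2)).image fun p => p.1.2 + p.2.2).card) :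
    (𝒢.image fun p => p.1.1 + p.2.1).card * m ≤ (𝒢.image fun p => p.1 + p.2).card :=
  fibered_sumset_lower_bound_general ℋ 𝒢 hbase m hfib
end
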